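/- arXiv:1812.01137 — 2 statements merged into one kernel-verified Lean document; each statement's English description precedes it below -/
import Mathlib

section
/- The expected one-step increase in confidence under Bayes updating equals the reward: ∑_y p_1^u(y) (C_1(F(ρ,u,y)) − C_1(ρ)) = ∑_y p_1^u(y) log( p_1^u(y) / ∑_{j≠1} 𝜌̃_j p_j^u(y) ), where 𝜌̃_j = ρ_j/(1−ρ_1). -/
/-!
For each observation `y` the posterior odds of `h1` against the rest are
`ρ h1 * p h1 y / ∑_{j ≠ h1} ρ j * p j y`, since the common normalising constant cancels.
Dividing by the prior odds `ρ h1 / (1 - ρ h1)` leaves the likelihood ratio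
`p h1 y / ∑_{j ≠ h1} ρ̃ j * p j y`, so the two expectations agree term by term.
-/

/-- Bayes update of a belief `ρ` with likelihoods `p · y` at observation `y`. -/
noncomputable def bayesUpdate {H Y : Type*} [Fintype H]
    (ρ : H → ℝ) (p : H → Y → ℝ) (y : Y) : H → ℝ :=
  fun h => ρ h * p h y / ∑ h', ρ h' * p h' y

open Finset

lemma div_add_div_one_sub_div_add {a b : ℝ} (hab : a + b ≠ 0) :
    a / (a + b) / (1 - a / (a + b)) = a / b := by
  rw [one_sub_div hab, add_sub_cancel_left, div_div_div_cancel_right₀ hab]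

lemma bayesUpdate_div_one_sub_bayesUpdate {H Y : Type*} [Fintype H] [DecidableEq H]
    (ρ : H → ℝ) (p : H → Y → ℝ) (y : Y) (i : H) (hZ : ∑ h, ρ h * p h y ≠ 0) :
    bayesUpdate ρ p y i / (1 - bayesUpdate ρ p y i)
      = ρ i * p i y / ∑ j ∈ univ.erase i, ρ j * p j y := by
  rw [← add_sum_erase univ (fun h => ρ h * p h y) (mem_univ i)] at hZ
  rw [bayesUpdate, ← add_sum_erase univ (fun h => ρ h * p h y) (mem_univ i),
    div_add_div_one_sub_div_add hZ]

lemma log_odds_bayesUpdate_sub_log_odds {H Y : Type*} [Fintype H] [DecidableEq H]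
    (ρ : H → ℝ) (p : H → Y → ℝ) (y : Y) (i : H) (hZ : ∑ h, ρ h * p h y ≠ 0)
    (hρi : ρ i ≠ 0) (hρi' : ρ i ≠ 1) (hpi : p i y ≠ 0)
    (hrest : ∑ j ∈ univ.erase i, ρ j * p j y ≠ 0) :
    Real.log (bayesUpdate ρ p y i / (1 - bayesUpdate ρ p y i)) - Real.log (ρ i / (1 - ρ i))
      = Real.log (p i y / ∑ j ∈ univ.erase i, (ρ j / (1 - ρ i)) * p j y) := by
  have hc : 1 - ρ i ≠ 0 := sub_ne_zero.mpr (Ne.symm hρi')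
  have hnormalised : ∑ j ∈ univ.erase i, (ρ j / (1 - ρ i)) * p j y
      = (∑ j ∈ univ.erase i, ρ j * p j y) / (1 - ρ i) := by
    rw [sum_div]
    exact sum_congr rfl fun j _ => div_mul_eq_mul_div _ _ _
  rw [bayesUpdate_div_one_sub_bayesUpdate ρ p y i hZ, hnormalised,
    ← Real.log_div (by positivity) (by positivity)]
  congr 1
  field_simp

lemma Finset.sum_mul_pos_of_sum_pos {ι : Type*} {s : Finset ι} {w f : ι → ℝ}
    (hw : ∀ i ∈ s, 0 ≤ w i) (hsum : 0 < ∑ i ∈ s, w i) (hf : ∀ i ∈ s, 0 < f i) :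
    0 < ∑ i ∈ s, w i * f i := by
  obtain ⟨j, hj, hwj⟩ : ∃ j ∈ s, (0 : ι → ℝ) j < w j :=
    exists_lt_of_sum_lt (by simpa using hsum)
  exact sum_pos' (fun i hi => mul_nonneg (hw i hi) (hf i hi).le) ⟨j, hj, mul_pos hwj (hf j hj)⟩

theorem expected_confidence_increase_eq_reward_general {H Y : Type*}
    [Fintype H] [Fintype Y] [DecidableEq H]
    (h1 : H) (ρ : H → ℝ) (hρ0 : ∀ h, 0 ≤ ρ h) (hρ1 : ∑ h, ρ h = 1)
    (hpos : 0 < ρ h1) (hlt : ρ h1 < 1)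
    (p : H → Y → ℝ) (hppos : ∀ h y, 0 < p h y) :
    ∑ y, p h1 y *
        (Real.log (bayesUpdate ρ p y h1 / (1 - bayesUpdate ρ p y h1)) -
          Real.log (ρ h1 / (1 - ρ h1)))
      = ∑ y, p h1 y *
          Real.log (p h1 y /
            ∑ j ∈ Finset.univ.erase h1, (ρ j / (1 - ρ h1)) * p j y) := by
  have hrest_mass : 0 < ∑ j ∈ univ.erase h1, ρ j := by
    rw [sum_erase_eq_sub (mem_univ h1), hρ1]
    linarith
  refine sum_congr rfl fun y _ => congrArg _ ?_
  have hrest : 0 < ∑ j ∈ univ.erase h1, ρ j * p j y :=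
    sum_mul_pos_of_sum_pos (fun j _ => hρ0 j) hrest_mass fun j _ => hppos j y
  have hZ : 0 < ∑ h, ρ h * p h y := by
    rw [← add_sum_erase univ (fun h => ρ h * p h y) (mem_univ h1)]
    exact add_pos (mul_pos hpos (hppos h1 y)) hrest
  exact log_odds_bayesUpdate_sub_log_odds ρ p y h1 hZ.ne' hpos.ne' hlt.ne (hppos h1 y).ne'
    hrest.ne'

/-- Under Bayes updating, the expected one-step increase in the confidence level
`C_1(ρ) = log (ρ_1/(1−ρ_1))` equals the reward
`r(ρ,u) = ∑_y p_1^u(y) log ( p_1^u(y) / ∑_{j≠1} ρ̃_j p_j^u(y) )` with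
`ρ̃_j = ρ_j/(1−ρ_1)`. -/
theorem expected_confidence_increase_eq_reward {H Y : Type*}
    [Fintype H] [Fintype Y] [DecidableEq H]
    (h1 : H) (ρ : H → ℝ) (hρ0 : ∀ h, 0 ≤ ρ h) (hρ1 : ∑ h, ρ h = 1)
    (hpos : 0 < ρ h1) (hlt : ρ h1 < 1)
    (p : H → Y → ℝ) (hppos : ∀ h y, 0 < p h y) (hpsum : ∀ h, ∑ y, p h y = 1) :
    ∑ y, p h1 y *
        (Real.log (bayesUpdate ρ p y h1 / (1 - bayesUpdate ρ p y h1)) -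
          Real.log (ρ h1 / (1 - ρ h1)))
      = ∑ y, p h1 y *
          Real.log (p h1 y /
            ∑ j ∈ Finset.univ.erase h1, (ρ j / (1 - ρ h1)) * p j y) :=
  expected_confidence_increase_eq_reward_general h1 ρ hρ0 hρ1 hpos hlt p hppos
end

section
/- Fixed point verification: let β* ∈ Δ(H̃) achieve the minimax value R* = max_u ∑_{j∈H̃} β*_j D(p_1^u ‖ p_j^u). Define w(ρ) = −∑_{j≠1} β*_j log(ρ_j/(1−ρ_1)). Then for every ρ ∈ Δ(H) with all coordinates positive, max_u { r(ρ,u) + ∑_y p_1^u(y) w(F(ρ,u,y)) } = R* + w(ρ), where r(ρ,u) = ∑_y p_1^u(y) log(p_1^u(y)/∑_{j≠1} (ρ_j/(1−ρ_1)) p_j^u(y)) and F is the Bayes update under hypothesis-1 likelihoods. -/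
/-!
The identity holds separately for every action `u`, so taking the maximum over `u` preserves it.
Write `q_j = ρ_j / (1 - ρ_1)` for the prior conditioned on `H̃` and `M(y) = ∑_{j≠1} q_j p_j^u(y)`.
The Bayes update conditioned on `H̃` is `q_j p_j^u(y) / M(y)`, so, because `β` sums to one, the
`log M(y)` in `r(ρ,u)` cancels against the one in `w(F(ρ,u,y))`, leaving
`∑_j β_j log (p_1^u(y) / p_j^u(y)) - ∑_j β_j log q_j`; its `p_1^u`-expectation is
`∑_j β_j D(p_1^u ‖ p_j^u) + w(ρ)`.
-/

open Finset Real

section WeightedLog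

variable {ι : Type*} {s : Finset ι} {β : ι → ℝ}

lemma sum_mul_log_div_of_sum_eq_one (hβ : ∑ j ∈ s, β j = 1) {a : ι → ℝ} {M : ℝ}
    (ha : ∀ j ∈ s, a j ≠ 0) (hM : M ≠ 0) :
    ∑ j ∈ s, β j * log (a j / M) = ∑ j ∈ s, β j * log (a j) - log M := by
  rw [sum_congr rfl fun j hj => by rw [log_div (ha j hj) hM, mul_sub], sum_sub_distrib,
    ← sum_mul, hβ, one_mul]

lemma log_div_mixture_sub_sum_mul_log_posterior (hβ : ∑ j ∈ s, β j = 1) {q b : ι → ℝ} {a : ℝ}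
    (hq : ∀ j ∈ s, 0 < q j) (hb : ∀ j ∈ s, 0 < b j) (ha : 0 < a) :
    log (a / ∑ j ∈ s, q j * b j) - ∑ j ∈ s, β j * log (q j * b j / ∑ k ∈ s, q k * b k)
      = ∑ j ∈ s, β j * log (a / b j) - ∑ j ∈ s, β j * log (q j) := by
  obtain ⟨i, hi⟩ : s.Nonempty := nonempty_of_sum_ne_zero (by rw [hβ]; exact one_ne_zero)
  have hM : 0 < ∑ k ∈ s, q k * b k :=
    sum_pos' (fun k hk => (mul_pos (hq k hk) (hb k hk)).le) ⟨i, hi, mul_pos (hq i hi) (hb i hi)⟩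
  have hpost : ∑ j ∈ s, β j * log (q j * b j)
      = ∑ j ∈ s, β j * log (q j) + ∑ j ∈ s, β j * log (b j) := by
    rw [← sum_add_distrib]
    exact sum_congr rfl fun j hj => by rw [log_mul (hq j hj).ne' (hb j hj).ne', mul_add]
  have hlik : ∑ j ∈ s, β j * log (a / b j) = log a - ∑ j ∈ s, β j * log (b j) := by
    rw [← one_mul (log a), ← hβ, sum_mul, ← sum_sub_distrib]
    exact sum_congr rfl fun j hj => by rw [log_div ha.ne' (hb j hj).ne', mul_sub]
  rw [sum_mul_log_div_of_sum_eq_one hβ (fun j hj => (mul_pos (hq j hj) (hb j hj)).ne') hM.ne',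
    log_div ha.ne' hM.ne', hpost, hlik]
  ring

end WeightedLog

lemma sum_mul_sub_of_sum_eq_one {Y ι : Type*} [Fintype Y] {a : Y → ℝ} (ha : ∑ y, a y = 1)
    (s : Finset ι) (β : ι → ℝ) (f : ι → Y → ℝ) (c : ℝ) :
    ∑ y, a y * (∑ j ∈ s, β j * f j y - c) = ∑ j ∈ s, β j * ∑ y, a y * f j y - c := by
  simp only [mul_sub, sum_sub_distrib, mul_sum, ← sum_mul, ha, one_mul]
  rw [sum_comm]
  simp only [mul_left_comm]

lemma posterior_div_one_sub_posterior {ι : Type*} [Fintype ι] [DecidableEq ι] (i : ι)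
    {ρ b : ι → ℝ} (hρ : ρ i ≠ 1) (hS : ∑ k, ρ k * b k ≠ 0) (j : ι) :
    (ρ j * b j / ∑ k, ρ k * b k) / (1 - ρ i * b i / ∑ k, ρ k * b k)
      = ρ j / (1 - ρ i) * b j / ∑ k ∈ univ.erase i, ρ k / (1 - ρ i) * b k := by
  have hc : 1 - ρ i ≠ 0 := sub_ne_zero.2 hρ.symm
  rw [one_sub_div hS, div_div_div_cancel_right₀ hS, ← add_sum_erase univ _ (mem_univ i),
    add_sub_cancel_left]
  simp only [div_mul_eq_mul_div, ← sum_div]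
  rw [div_div_div_cancel_right₀ hc]

open Finset in
theorem fixed_point_verification_general {H U Y : Type*}
    [Fintype H] [Fintype U] [Fintype Y] [DecidableEq H] [Nonempty U]
    (h1 : H)
    (p : H → U → Y → ℝ) (hppos : ∀ h u y, 0 < p h u y)
    (hpsum : ∀ h u, ∑ y, p h u y = 1)
    (β : H → ℝ)
    (hβ1 : ∑ j ∈ univ.erase h1, β j = 1)
    (R : ℝ)
    (hR : R = univ.sup' univ_nonempty (fun u =>
      ∑ j ∈ univ.erase h1, β j * ∑ y, p h1 u y * Real.log (p h1 u y / p j u y)))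
    (ρ : H → ℝ) (hρpos : ∀ h, 0 < ρ h) (hρlt : ρ h1 < 1) :
    univ.sup' univ_nonempty (fun u =>
        (∑ y, p h1 u y *
          Real.log (p h1 u y / ∑ j ∈ univ.erase h1, (ρ j / (1 - ρ h1)) * p j u y)) +
        ∑ y, p h1 u y *
          (-(∑ j ∈ univ.erase h1, β j *
            Real.log ((ρ j * p j u y / ∑ h', ρ h' * p h' u y) /
              (1 - ρ h1 * p h1 u y / ∑ h', ρ h' * p h' u y)))))
      = R + (-(∑ j ∈ univ.erase h1, β j * Real.log (ρ j / (1 - ρ h1)))) := by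
  have hq : ∀ j ∈ univ.erase h1, 0 < ρ j / (1 - ρ h1) := fun j _ =>
    div_pos (hρpos j) (sub_pos.2 hρlt)
  rw [hR, sup'_add]
  refine sup'_congr _ rfl fun u _ => ?_
  have hS : ∀ y, ∑ h', ρ h' * p h' u y ≠ 0 := fun y =>
    (sum_pos (fun h _ => mul_pos (hρpos h) (hppos h u y)) ⟨h1, mem_univ _⟩).ne'
  simp only [posterior_div_one_sub_posterior h1 hρlt.ne (hS _)]
  rw [← sum_add_distrib, ← sub_eq_add_neg, ← sum_mul_sub_of_sum_eq_one (hpsum h1 u)]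
  refine sum_congr rfl fun y _ => ?_
  rw [← log_div_mixture_sub_sum_mul_log_posterior hβ1 hq (fun j _ => hppos j u y) (hppos h1 u y)]
  ring

open Finset in
/-- Fixed point verification (Lemma 2 of the paper): let `β* ∈ Δ(H̃)` be a
minimizer of `β ↦ max_u ∑_{j≠1} β_j D(p_1^u ‖ p_j^u)` with minimax value
`R* = max_u ∑_{j≠1} β*_j D(p_1^u ‖ p_j^u)`.  With
`w(ρ) = −∑_{j≠1} β*_j log (ρ_j/(1−ρ_1))`,
`r(ρ,u) = ∑_y p_1^u(y) log (p_1^u(y)/∑_{j≠1} (ρ_j/(1−ρ_1)) p_j^u(y))` and `F` the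
Bayes update under hypothesis-1 likelihoods, every strictly positive `ρ ∈ Δ(H)`
satisfies `max_u { r(ρ,u) + ∑_y p_1^u(y) w(F(ρ,u,y)) } = R* + w(ρ)`. -/
theorem fixed_point_verification {H U Y : Type*}
    [Fintype H] [Fintype U] [Fintype Y] [DecidableEq H] [Nonempty U]
    (h1 : H)
    (p : H → U → Y → ℝ) (hppos : ∀ h u y, 0 < p h u y)
    (hpsum : ∀ h u, ∑ y, p h u y = 1)
    (β : H → ℝ) (hβ0 : ∀ j, 0 ≤ β j) (hβh1 : β h1 = 0)
    (hβ1 : ∑ j ∈ univ.erase h1, β j = 1)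
    (R : ℝ)
    (hR : R = univ.sup' univ_nonempty (fun u =>
      ∑ j ∈ univ.erase h1, β j * ∑ y, p h1 u y * Real.log (p h1 u y / p j u y)))
    (hmin : ∀ β' : H → ℝ, (∀ j, 0 ≤ β' j) → β' h1 = 0 →
      (∑ j ∈ univ.erase h1, β' j = 1) →
      R ≤ univ.sup' univ_nonempty (fun u =>
        ∑ j ∈ univ.erase h1, β' j * ∑ y, p h1 u y * Real.log (p h1 u y / p j u y)))
    (ρ : H → ℝ) (hρpos : ∀ h, 0 < ρ h) (hρ1 : ∑ h, ρ h = 1) (hρlt : ρ h1 < 1) :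
    univ.sup' univ_nonempty (fun u =>
        (∑ y, p h1 u y *
          Real.log (p h1 u y / ∑ j ∈ univ.erase h1, (ρ j / (1 - ρ h1)) * p j u y)) +
        ∑ y, p h1 u y *
          (-(∑ j ∈ univ.erase h1, β j *
            Real.log ((ρ j * p j u y / ∑ h', ρ h' * p h' u y) /
              (1 - ρ h1 * p h1 u y / ∑ h', ρ h' * p h' u y)))))
      = R + (-(∑ j ∈ univ.erase h1, β j * Real.log (ρ j / (1 - ρ h1)))) :=
  fixed_point_verification_general h1 p hppos hpsum β hβ1 R hR ρ hρpos hρlt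
end
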